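/- arXiv:1705.00189 — 3 statements merged into one kernel-verified Lean document; each statement's English description precedes it below -/
import Mathlib

section
/- If n is an odd positive integer, then 2^ω(n) divides σ**(n), where ω(n) is the number of distinct prime factors of n. -/
def IsUnitaryDivisor (d n : ℕ) : Prop := d ∣ n ∧ Nat.gcd d (n / d) = 1

def IsBiunitaryDivisor (d n : ℕ) : Prop :=
  d ∣ n ∧ ∀ c, IsUnitaryDivisor c d → IsUnitaryDivisor c (n / d) → c = 1

open scoped Classical in
noncomputable def sbu (n : ℕ) : ℕ :=
  ∑ d ∈ n.divisors.filter (fun d => IsBiunitaryDivisor d n), d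

open scoped Classical

lemma unitary_factorization {c m : ℕ} (hm : m ≠ 0) (h : IsUnitaryDivisor c m)
    {p : ℕ} (hp : p.Prime) (hpc : p ∣ c) : c.factorization p = m.factorization p := by
  obtain ⟨hdvd, hgcd⟩ := h
  have hc0 : c ≠ 0 := fun h0 => hm (by simpa [h0] using hdvd)
  have hnd : ¬ p ∣ (m / c) := by
    intro hpd
    have h1 : p ∣ 1 := hgcd ▸ Nat.dvd_gcd hpc hpd
    exact hp.ne_one (Nat.dvd_one.mp h1)
  have h0 : (m / c).factorization p = 0 := Nat.factorization_eq_zero_of_not_dvd hnd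
  rw [Nat.factorization_div hdvd] at h0
  have hle : c.factorization p ≤ m.factorization p :=
    (Nat.factorization_le_iff_dvd hc0 hm).mpr hdvd p
  simp only [Finsupp.tsub_apply] at h0
  omega

lemma ordProj_unitary {m p : ℕ} (hp : p.Prime) (hm : m ≠ 0) :
    IsUnitaryDivisor (p ^ m.factorization p) m :=
  ⟨Nat.ordProj_dvd m p, Nat.Coprime.pow_left _ (Nat.coprime_ordCompl hp hm)⟩

lemma biunitary_iff {d n : ℕ} (hn : n ≠ 0) (hd : d ∣ n) :
    IsBiunitaryDivisor d n ↔
      ∀ p : ℕ, p.Prime → d.factorization p = 0 ∨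
        d.factorization p ≠ (n / d).factorization p := by
  have hd0 : d ≠ 0 := fun h0 => hn (by simpa [h0] using hd)
  have hnd0 : n / d ≠ 0 :=
    (Nat.div_pos (Nat.le_of_dvd (Nat.pos_of_ne_zero hn) hd) (Nat.pos_of_ne_zero hd0)).ne'
  constructor
  · rintro ⟨-, h⟩ p hp
    by_contra hcon
    push_neg at hcon
    obtain ⟨h1, h2⟩ := hcon
    have u1 := ordProj_unitary hp hd0
    have u2 := ordProj_unitary (m := n / d) hp hnd0
    rw [← h2] at u2
    have hone := h _ u1 u2
    exact hp.ne_one ((pow_eq_one_iff_left h1).mp hone)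
  · intro h
    refine ⟨hd, fun c hc1 hc2 => ?_⟩
    by_contra hcne
    obtain ⟨p, hp, hpc⟩ := Nat.exists_prime_and_dvd hcne
    have e1 := unitary_factorization hd0 hc1 hp hpc
    have e2 := unitary_factorization hnd0 hc2 hp hpc
    have hc0 : c ≠ 0 := fun h0 => hd0 (by simpa [h0] using hc1.1)
    have hpos := hp.factorization_pos_of_dvd hc0 hpc
    rcases h p hp with h' | h' <;> omega

lemma sbu_even {p k : ℕ} (hp : p.Prime) (hp2 : p ≠ 2) (hk : k ≠ 0) : 2 ∣ sbu (p ^ k) := by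
  have hpk : p ^ k ≠ 0 := pow_ne_zero k hp.pos.ne'
  have hoddpk : p ^ k % 2 = 1 := Nat.odd_iff.mp ((hp.odd_of_ne_two hp2).pow)
  have hodd : ∀ d : ℕ, d ∣ p ^ k → d % 2 = 1 := by
    intro d hd
    rcases Nat.mod_two_eq_zero_or_one d with h | h
    · exfalso
      have h2 : 2 ∣ p ^ k := (Nat.dvd_of_mod_eq_zero h).trans hd
      omega
    · exact h
  rw [← ZMod.natCast_eq_zero_iff]
  unfold sbu
  rw [Nat.cast_sum]
  refine Finset.sum_involution (fun d _ => p ^ k / d) ?_ ?_ ?_ ?_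
  · intro d hd
    obtain ⟨hmem, hbi⟩ := Finset.mem_filter.mp hd
    have hdvd : d ∣ p ^ k := (Nat.mem_divisors.mp hmem).1
    have h1 : (d : ZMod 2) = 1 := by
      rw [← ZMod.natCast_mod, hodd d hdvd, Nat.cast_one]
    have h2 : ((p ^ k / d : ℕ) : ZMod 2) = 1 := by
      rw [← ZMod.natCast_mod, hodd _ (Nat.div_dvd_of_dvd hdvd), Nat.cast_one]
    show (d : ZMod 2) + ((p ^ k / d : ℕ) : ZMod 2) = 0
    rw [h1, h2]; decide
  · intro d hd _
    obtain ⟨hmem, hbi⟩ := Finset.mem_filter.mp hd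
    have hdvd : d ∣ p ^ k := (Nat.mem_divisors.mp hmem).1
    have hd0 : d ≠ 0 := fun h0 => hpk (by simpa [h0] using hdvd)
    intro heq
    have heq' : p ^ k / d = d := heq
    rcases (biunitary_iff hpk hdvd).mp hbi p hp with h' | h'
    · have hpd : ¬ p ∣ d := by
        intro hdvd'
        exact absurd (hp.factorization_pos_of_dvd hd0 hdvd') (by omega)
      have hcop : Nat.Coprime d (p ^ k) :=
        Nat.Coprime.pow_right k ((hp.coprime_iff_not_dvd.mpr hpd).symm)
      have hd1 : d = 1 := Nat.Coprime.eq_one_of_dvd hcop hdvd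
      rw [hd1, Nat.div_one] at heq'
      exact absurd heq' (Nat.one_lt_pow hk hp.one_lt).ne'
    · exact h' (by rw [heq'])
  · intro d hd
    obtain ⟨hmem, hbi⟩ := Finset.mem_filter.mp hd
    have hdvd : d ∣ p ^ k := (Nat.mem_divisors.mp hmem).1
    refine Finset.mem_filter.mpr ⟨Nat.mem_divisors.mpr ⟨Nat.div_dvd_of_dvd hdvd, hpk⟩, ?_⟩
    obtain ⟨hd', hc⟩ := hbi
    have hdd : p ^ k / (p ^ k / d) = d := Nat.div_div_self hdvd hpk
    exact ⟨Nat.div_dvd_of_dvd hdvd, fun c u1 u2 => hc c (hdd ▸ u2) u1⟩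
  · intro d hd
    obtain ⟨hmem, _⟩ := Finset.mem_filter.mp hd
    exact Nat.div_div_self (Nat.mem_divisors.mp hmem).1 hpk

lemma gcd_mul_left_eq {a b x y : ℕ} (hab : Nat.Coprime a b) (hx : x ∣ a) (hy : y ∣ b) :
    Nat.gcd (x * y) a = x := by
  rw [Nat.Coprime.gcd_mul_right_cancel x (Nat.Coprime.coprime_dvd_left hy hab.symm),
    Nat.gcd_eq_left hx]

lemma gcd_decomp {a b d : ℕ} (hab : Nat.Coprime a b) (hd : d ∣ a * b) :
    Nat.gcd d a * Nat.gcd d b = d ∧ Nat.gcd d a ∣ a ∧ Nat.gcd d b ∣ b := by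
  obtain ⟨x, y, hx, hy, rfl⟩ := exists_dvd_and_dvd_of_dvd_mul hd
  have g1 : Nat.gcd (x * y) a = x := gcd_mul_left_eq hab hx hy
  have g2 : Nat.gcd (x * y) b = y := by
    rw [mul_comm]; exact gcd_mul_left_eq hab.symm hy hx
  exact ⟨by rw [g1, g2], by rw [g1]; exact hx, by rw [g2]; exact hy⟩

lemma coprime_fact_or {a b p : ℕ} (hp : p.Prime) (hab : Nat.Coprime a b) :
    a.factorization p = 0 ∨ b.factorization p = 0 := by
  by_contra hcon
  push_neg at hcon
  have hpa : p ∣ a := Nat.dvd_of_factorization_pos hcon.1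
  have hpb : p ∣ b := Nat.dvd_of_factorization_pos hcon.2
  exact (hp.coprime_iff_not_dvd.mp (Nat.Coprime.coprime_dvd_left hpa hab)) hpb

lemma biunitary_gcd_left {a b d : ℕ} (ha : a ≠ 0) (hb : b ≠ 0) (hab : Nat.Coprime a b)
    (h : IsBiunitaryDivisor d (a * b)) : IsBiunitaryDivisor (Nat.gcd d a) a := by
  have hab0 : a * b ≠ 0 := mul_ne_zero ha hb
  have hdvd : d ∣ a * b := h.1
  have hd0 : d ≠ 0 := fun h0 => hab0 (by simpa [h0] using hdvd)
  obtain ⟨hxy, hxa, hyb⟩ := gcd_decomp hab hdvd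
  rw [biunitary_iff ha hxa]
  intro p hp
  have hcond := (biunitary_iff hab0 hdvd).mp h p hp
  have hfab : (a * b).factorization p = a.factorization p + b.factorization p := by
    rw [Nat.factorization_mul ha hb]; simp
  have hgcd : (Nat.gcd d a).factorization p
      = min (d.factorization p) (a.factorization p) := by
    rw [Nat.factorization_gcd hd0 ha, Finsupp.inf_apply]
  have hdv : (a / Nat.gcd d a).factorization p
      = a.factorization p - (Nat.gcd d a).factorization p := by
    rw [Nat.factorization_div hxa, Finsupp.tsub_apply]
  have hdv2 : ((a * b) / d).factorization p
      = (a * b).factorization p - d.factorization p := by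
    rw [Nat.factorization_div hdvd, Finsupp.tsub_apply]
  have hle : d.factorization p ≤ (a * b).factorization p :=
    (Nat.factorization_le_iff_dvd hd0 hab0).mpr hdvd p
  have hor := coprime_fact_or hp hab
  omega

lemma biunitary_gcd_right {a b d : ℕ} (ha : a ≠ 0) (hb : b ≠ 0) (hab : Nat.Coprime a b)
    (h : IsBiunitaryDivisor d (a * b)) : IsBiunitaryDivisor (Nat.gcd d b) b :=
  biunitary_gcd_left hb ha hab.symm (by rwa [mul_comm] at h)

lemma biunitary_mul {a b x y : ℕ} (ha : a ≠ 0) (hb : b ≠ 0) (hab : Nat.Coprime a b)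
    (hx : IsBiunitaryDivisor x a) (hy : IsBiunitaryDivisor y b) :
    IsBiunitaryDivisor (x * y) (a * b) := by
  have hab0 : a * b ≠ 0 := mul_ne_zero ha hb
  have hxa : x ∣ a := hx.1
  have hyb : y ∣ b := hy.1
  have hx0 : x ≠ 0 := fun h0 => ha (by simpa [h0] using hxa)
  have hy0 : y ≠ 0 := fun h0 => hb (by simpa [h0] using hyb)
  have hax0 : a / x ≠ 0 :=
    (Nat.div_pos (Nat.le_of_dvd (Nat.pos_of_ne_zero ha) hxa) (Nat.pos_of_ne_zero hx0)).ne'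
  have hby0 : b / y ≠ 0 :=
    (Nat.div_pos (Nat.le_of_dvd (Nat.pos_of_ne_zero hb) hyb) (Nat.pos_of_ne_zero hy0)).ne'
  rw [biunitary_iff hab0 (mul_dvd_mul hxa hyb)]
  intro p hp
  have hc1 := (biunitary_iff ha hxa).mp hx p hp
  have hc2 := (biunitary_iff hb hyb).mp hy p hp
  have hm : (x * y).factorization p = x.factorization p + y.factorization p := by
    rw [Nat.factorization_mul hx0 hy0]; simp
  have hdd : (a * b) / (x * y) = (a / x) * (b / y) := (Nat.div_mul_div_comm hxa hyb).symm
  have hm2 : ((a * b) / (x * y)).factorization p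
      = (a / x).factorization p + (b / y).factorization p := by
    rw [hdd, Nat.factorization_mul hax0 hby0]; simp
  have hdvx : (a / x).factorization p = a.factorization p - x.factorization p := by
    rw [Nat.factorization_div hxa, Finsupp.tsub_apply]
  have hdvy : (b / y).factorization p = b.factorization p - y.factorization p := by
    rw [Nat.factorization_div hyb, Finsupp.tsub_apply]
  have hxle : x.factorization p ≤ a.factorization p :=
    (Nat.factorization_le_iff_dvd hx0 ha).mpr hxa p
  have hyle : y.factorization p ≤ b.factorization p :=
    (Nat.factorization_le_iff_dvd hy0 hb).mpr hyb p
  have hor := coprime_fact_or hp hab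
  omega

lemma sbu_mul {a b : ℕ} (ha : a ≠ 0) (hb : b ≠ 0) (hab : Nat.Coprime a b) :
    sbu (a * b) = sbu a * sbu b := by
  have hab0 : a * b ≠ 0 := mul_ne_zero ha hb
  unfold sbu
  rw [Finset.sum_mul_sum, ← Finset.sum_product']
  refine Finset.sum_nbij' (fun d => (Nat.gcd d a, Nat.gcd d b)) (fun x => x.1 * x.2)
    ?_ ?_ ?_ ?_ ?_
  · intro d hd
    obtain ⟨hmem, hbi⟩ := Finset.mem_filter.mp hd
    have hdvd : d ∣ a * b := (Nat.mem_divisors.mp hmem).1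
    obtain ⟨hxy, hxa, hyb⟩ := gcd_decomp hab hdvd
    exact Finset.mem_product.mpr
      ⟨Finset.mem_filter.mpr ⟨Nat.mem_divisors.mpr ⟨hxa, ha⟩,
          biunitary_gcd_left ha hb hab hbi⟩,
        Finset.mem_filter.mpr ⟨Nat.mem_divisors.mpr ⟨hyb, hb⟩,
          biunitary_gcd_right ha hb hab hbi⟩⟩
  · intro x hx
    obtain ⟨hx1, hx2⟩ := Finset.mem_product.mp hx
    obtain ⟨hmem1, hbi1⟩ := Finset.mem_filter.mp hx1
    obtain ⟨hmem2, hbi2⟩ := Finset.mem_filter.mp hx2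
    exact Finset.mem_filter.mpr
      ⟨Nat.mem_divisors.mpr
          ⟨mul_dvd_mul (Nat.mem_divisors.mp hmem1).1 (Nat.mem_divisors.mp hmem2).1, hab0⟩,
        biunitary_mul ha hb hab hbi1 hbi2⟩
  · intro d hd
    obtain ⟨hmem, _⟩ := Finset.mem_filter.mp hd
    exact (gcd_decomp hab (Nat.mem_divisors.mp hmem).1).1
  · intro x hx
    obtain ⟨hx1, hx2⟩ := Finset.mem_product.mp hx
    obtain ⟨hmem1, _⟩ := Finset.mem_filter.mp hx1
    obtain ⟨hmem2, _⟩ := Finset.mem_filter.mp hx2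
    have hxa : x.1 ∣ a := (Nat.mem_divisors.mp hmem1).1
    have hyb : x.2 ∣ b := (Nat.mem_divisors.mp hmem2).1
    have g1 : Nat.gcd (x.1 * x.2) a = x.1 := gcd_mul_left_eq hab hxa hyb
    have g2 : Nat.gcd (x.1 * x.2) b = x.2 := by
      rw [mul_comm]; exact gcd_mul_left_eq hab.symm hyb hxa
    exact Prod.ext g1 g2
  · intro d hd
    obtain ⟨hmem, _⟩ := Finset.mem_filter.mp hd
    exact ((gcd_decomp hab (Nat.mem_divisors.mp hmem).1).1).symm

theorem stmt5 (n : ℕ) (hn : 0 < n) (hodd : Odd n) :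
    2 ^ n.primeFactors.card ∣ sbu n := by
  induction n using Nat.recOnPosPrimePosCoprime with
  | prime_pow p k hp hk =>
    have hp2 : p ≠ 2 := by
      rintro rfl
      exact (Nat.not_odd_iff_even.mpr (Nat.even_pow.mpr ⟨even_two, hk.ne'⟩)) hodd
    rw [Nat.primeFactors_prime_pow hk.ne' hp, Finset.card_singleton, pow_one]
    exact sbu_even hp hp2 hk.ne'
  | zero => exact absurd hn (lt_irrefl 0)
  | one => simp
  | coprime a b ha hb hab iha ihb =>
    have ha0 : a ≠ 0 := by omega
    have hb0 : b ≠ 0 := by omega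
    rw [Nat.odd_mul] at hodd
    have hcard : (a * b).primeFactors.card = a.primeFactors.card + b.primeFactors.card := by
      rw [Nat.primeFactors_mul ha0 hb0,
        Finset.card_union_of_disjoint (Nat.Coprime.disjoint_primeFactors hab)]
    rw [hcard, pow_add, sbu_mul ha0 hb0 hab]
    exact mul_dvd_mul (iha (by omega) hodd.1) (ihb (by omega) hodd.2)
end

section
/- For any prime p, positive integer m, and positive integer e ≥ 2m - 1, σ**(p^e)/p^e ≥ σ**(p^(2m))/p^(2m), i.e., p^(2m) σ**(p^e) ≥ p^e σ**(p^(2m)). -/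
lemma unitary_pow {p c k : ℕ} (hp : p.Prime) (h : IsUnitaryDivisor c (p ^ k)) :
    c = 1 ∨ c = p ^ k := by
  obtain ⟨hd, hg⟩ := h
  obtain ⟨j, hj, rfl⟩ := (Nat.dvd_prime_pow hp).mp hd
  rcases eq_or_ne j 0 with rfl | h0
  · left; simp
  rcases eq_or_ne j k with rfl | hk
  · right; rfl
  exfalso
  have h1 : p ∣ p ^ j := dvd_pow_self p h0
  have h2 : p ^ k / p ^ j = p ^ (k - j) := Nat.pow_div hj hp.pos
  have h3 : p ∣ p ^ (k - j) := dvd_pow_self p (by omega)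
  have : p ∣ Nat.gcd (p ^ j) (p ^ k / p ^ j) := Nat.dvd_gcd h1 (h2 ▸ h3)
  rw [hg] at this
  have := Nat.le_of_dvd one_pos this
  have := hp.two_le
  omega

lemma biunitary_pow_iff {p i e : ℕ} (hp : p.Prime) (hi : i ≤ e) (he : 1 ≤ e) :
    IsBiunitaryDivisor (p ^ i) (p ^ e) ↔ 2 * i ≠ e := by
  have hdiv : p ^ e / p ^ i = p ^ (e - i) := Nat.pow_div hi hp.pos
  constructor
  · rintro ⟨-, hc⟩ h2
    have hi0 : i ≠ 0 := by omega
    have heq : e - i = i := by omega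
    have hu : IsUnitaryDivisor (p ^ i) (p ^ i) :=
      ⟨dvd_rfl, by rw [Nat.div_self (pow_pos hp.pos i)]; simp⟩
    have h1 : p ^ i = 1 := hc (p ^ i) hu (by rw [hdiv, heq]; exact hu)
    have : p ∣ p ^ i := dvd_pow_self p hi0
    rw [h1] at this
    have := Nat.le_of_dvd one_pos this
    have := hp.two_le
    omega
  · intro h2
    refine ⟨pow_dvd_pow p hi, fun c hc1 hc2 => ?_⟩
    rw [hdiv] at hc2
    rcases unitary_pow hp hc1 with rfl | rfl
    · rfl
    rcases unitary_pow hp hc2 with h | h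
    · exact h
    · exact absurd (Nat.pow_right_injective hp.two_le h) (by omega)

lemma sbu_prime_pow {p e : ℕ} (hp : p.Prime) (he : 1 ≤ e) :
    sbu (p ^ e) = (∑ i ∈ Finset.range (e + 1), p ^ i) -
      (if Even e then p ^ (e / 2) else 0) := by
  classical
  rw [sbu, Nat.divisors_prime_pow hp, Finset.filter_map, Finset.sum_map]
  have hfc : Finset.filter ((fun d => IsBiunitaryDivisor d (p ^ e)) ∘
      ⇑(⟨(p ^ ·), Nat.pow_right_injective hp.two_le⟩ : ℕ ↪ ℕ)) (Finset.range (e + 1)) =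
      Finset.filter (fun i => ¬ 2 * i = e) (Finset.range (e + 1)) :=
    Finset.filter_congr (fun i hi => by
      simpa using biunitary_pow_iff hp (Nat.lt_succ_iff.mp (Finset.mem_range.mp hi)) he)
  rw [hfc]
  show ∑ i ∈ Finset.filter (fun i => ¬ 2 * i = e) (Finset.range (e + 1)), p ^ i = _
  have key := Finset.sum_filter_add_sum_filter_not (Finset.range (e + 1))
    (fun i => 2 * i = e) (fun i => p ^ i)
  have hone : Finset.filter (fun i => 2 * i = e) (Finset.range (e + 1)) =
      if Even e then {e / 2} else ∅ := by
    split_ifs with h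
    · obtain ⟨k, hk⟩ := h
      ext j
      simp only [Finset.mem_filter, Finset.mem_range, Finset.mem_singleton]
      omega
    · rw [Nat.not_even_iff] at h
      ext j
      simp only [Finset.mem_filter, Finset.mem_range, Finset.notMem_empty, iff_false]
      omega
  have hsum1 : ∑ i ∈ Finset.filter (fun i => 2 * i = e) (Finset.range (e + 1)), p ^ i =
      if Even e then p ^ (e / 2) else 0 := by
    rw [hone]; split_ifs <;> simp
  rw [hsum1] at key
  omega

lemma geom_shift (p a b : ℕ) (hab : a ≤ b) :
    p ^ a * ∑ i ∈ Finset.range (b + 1), p ^ i =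
    p ^ b * (∑ i ∈ Finset.range (a + 1), p ^ i) + ∑ i ∈ Finset.Ico a b, p ^ i := by
  have h1 : ∀ x y : ℕ, p ^ x * ∑ i ∈ Finset.range (y + 1), p ^ i =
      ∑ i ∈ Finset.Ico x (x + y + 1), p ^ i := by
    intro x y
    rw [Finset.sum_Ico_eq_sum_range, show x + y + 1 - x = y + 1 by omega, Finset.mul_sum]
    exact Finset.sum_congr rfl fun i _ => (pow_add p x i).symm
  rw [h1, h1]
  rw [show b + a + 1 = a + b + 1 by omega]
  rw [← Finset.sum_Ico_consecutive (fun i => p ^ i) hab (by omega)]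
  omega

theorem stmt11 (p e m : ℕ) (hp : p.Prime) (hm : 0 < m) (he : 2 * m - 1 ≤ e) :
    p ^ (2 * m) * sbu (p ^ e) ≥ p ^ e * sbu (p ^ (2 * m)) := by
  have hp1 : 1 ≤ p := hp.one_lt.le
  have hT2m : sbu (p ^ (2 * m)) = (∑ i ∈ Finset.range (2 * m + 1), p ^ i) - p ^ m := by
    rw [sbu_prime_pow hp (by omega), if_pos (even_two_mul m), show 2 * m / 2 = m by omega]
  rw [hT2m, Nat.mul_sub, ← pow_add]
  rcases Nat.even_or_odd e with heven | hodd
  · -- e even, so e ≥ 2m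
    obtain ⟨k, hk⟩ := heven
    have hge : 2 * m ≤ e := by omega
    have hEe : sbu (p ^ e) = (∑ i ∈ Finset.range (e + 1), p ^ i) - p ^ (e / 2) := by
      rw [sbu_prime_pow hp (by omega), if_pos ⟨k, hk⟩]
    rw [hEe, Nat.mul_sub, ← pow_add]
    have h1 : p ^ (2 * m + e / 2) ≤ p ^ (e + m) :=
      Nat.pow_le_pow_right hp1 (by omega)
    have h2 : p ^ e * ∑ i ∈ Finset.range (2 * m + 1), p ^ i ≤
        p ^ (2 * m) * ∑ i ∈ Finset.range (e + 1), p ^ i := by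
      rw [geom_shift p (2 * m) e hge]; omega
    exact tsub_le_tsub h2 h1
  · -- e odd
    have hEe : sbu (p ^ e) = ∑ i ∈ Finset.range (e + 1), p ^ i := by
      rw [sbu_prime_pow hp (by omega), if_neg (Nat.not_even_iff_odd.mpr hodd)]
      omega
    rw [hEe]
    rcases eq_or_lt_of_le he with heq | hlt
    · -- e = 2m - 1
      have hgeom := geom_shift p e (2 * m) (by omega)
      have hs : ∑ i ∈ Finset.Ico e (2 * m), p ^ i = p ^ e := by
        rw [show 2 * m = e + 1 by omega]
        simp
      rw [hs] at hgeom
      have h1 : p ^ e ≤ p ^ (e + m) := Nat.pow_le_pow_right hp1 (by omega)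
      omega
    · -- e ≥ 2m
      have hge : 2 * m ≤ e := by omega
      have h2 : p ^ e * ∑ i ∈ Finset.range (2 * m + 1), p ^ i ≤
          p ^ (2 * m) * ∑ i ∈ Finset.range (e + 1), p ^ i := by
        rw [geom_shift p (2 * m) e hge]; omega
      omega
end

section
/- If e is a positive integer such that σ**(2^e) is a prime power, then e ≤ 4. -/
open Finset

lemma unit_iff (i c : ℕ) : IsUnitaryDivisor c (2 ^ i) ↔ c = 1 ∨ c = 2 ^ i := by
  constructor
  · rintro ⟨hd, hg⟩
    obtain ⟨j, hj, rfl⟩ := (Nat.dvd_prime_pow Nat.prime_two).1 hd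
    rcases Nat.eq_zero_or_pos j with rfl | hj0
    · left; simp
    · right
      rw [Nat.pow_div hj (by norm_num)] at hg
      rcases Nat.eq_zero_or_pos (i - j) with h0 | hpos
      · have : j = i := by omega
        rw [this]
      · exfalso
        have h2 : 2 ∣ Nat.gcd (2 ^ j) (2 ^ (i - j)) :=
          Nat.dvd_gcd (dvd_pow_self 2 hj0.ne') (dvd_pow_self 2 hpos.ne')
        rw [hg] at h2
        norm_num at h2
  · rintro (rfl | rfl)
    · exact ⟨one_dvd _, by simp⟩
    · exact ⟨dvd_rfl, by simp [Nat.div_self (pow_pos (by norm_num : (0:ℕ) < 2) i)]⟩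

lemma bi_iff (e i : ℕ) (he : 0 < e) (hie : i ≤ e) :
    IsBiunitaryDivisor (2 ^ i) (2 ^ e) ↔ 2 * i ≠ e := by
  constructor
  · rintro ⟨_, hc⟩ h2i
    have heq : 2 ^ e / 2 ^ i = 2 ^ i := by
      rw [Nat.pow_div hie (by norm_num)]
      congr 1
      omega
    have h1 := hc (2 ^ i) ((unit_iff i (2 ^ i)).2 (Or.inr rfl))
      (by rw [heq]; exact (unit_iff i (2 ^ i)).2 (Or.inr rfl))
    have : i = 0 := by
      by_contra hi0
      have : (2:ℕ) ^ i > 1 := Nat.one_lt_two_pow_iff.2 hi0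
      omega
    omega
  · intro hne
    refine ⟨pow_dvd_pow 2 hie, fun c hc1 hc2 => ?_⟩
    rw [Nat.pow_div hie (by norm_num)] at hc2
    rcases (unit_iff i c).1 hc1 with rfl | rfl
    · rfl
    · rcases (unit_iff (e - i) (2 ^ i)).1 hc2 with h | h
      · exact h
      · exfalso
        have : i = e - i := Nat.pow_right_injective (le_refl 2) h
        omega

lemma geom (n : ℕ) : ∑ i ∈ Finset.range n, 2 ^ i = 2 ^ n - 1 := by
  induction n with
  | zero => simp
  | succ n ih =>
    rw [Finset.sum_range_succ, ih, pow_succ]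
    have : (1:ℕ) ≤ 2 ^ n := Nat.one_le_two_pow
    omega

lemma sbu_pow (e : ℕ) (he : 0 < e) :
    sbu (2 ^ e) = ∑ i ∈ (Finset.range (e + 1)).filter (fun i => 2 * i ≠ e), 2 ^ i := by
  classical
  unfold sbu
  rw [Nat.divisors_prime_pow Nat.prime_two, Finset.filter_map, Finset.sum_map]
  simp only [Function.Embedding.coeFn_mk, Function.comp]
  congr 1
  apply Finset.filter_congr
  intro i hi
  simp only [Finset.mem_range] at hi
  simp [bi_iff e i he (by omega)]

lemma mod8 (j : ℕ) : 3 ^ j % 8 = 1 ∨ 3 ^ j % 8 = 3 := by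
  induction j with
  | zero => left; rfl
  | succ n ih =>
    rw [pow_succ, Nat.mul_mod]
    rcases ih with h | h <;> rw [h] <;> omega

lemma pdvd {p k a b : ℕ} (hp : p.Prime) (h : p ^ k = a * b) (ha : 1 < a) : p ∣ a := by
  obtain ⟨j, hj, rfl⟩ := (Nat.dvd_prime_pow hp).1 ⟨b, h⟩
  refine dvd_pow_self p ?_
  rintro rfl
  simp at ha

theorem stmt15 (e : ℕ) (he : 0 < e) (h : ∃ p k : ℕ, p.Prime ∧ sbu (2 ^ e) = p ^ k) :
    e ≤ 4 := by
  by_contra h5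
  push_neg at h5
  obtain ⟨p, k, hp, hpk⟩ := h
  rw [sbu_pow e he] at hpk
  rcases Nat.even_or_odd e with heven | hodd
  · -- e even, e = m + m with m ≥ 3
    obtain ⟨m, rfl⟩ := heven
    have hm : 3 ≤ m := by omega
    have hfil : (Finset.range (m + m + 1)).filter (fun i => 2 * i ≠ m + m)
        = (Finset.range (m + m + 1)).erase m := by
      rw [← Finset.filter_ne']
      apply Finset.filter_congr
      intro i _
      constructor <;> intro <;> omega
    rw [hfil] at hpk
    have hmem : m ∈ Finset.range (m + m + 1) := by simp
    have hsum0 := Finset.add_sum_erase _ (fun i => 2 ^ i) hmem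
    rw [geom, hpk] at hsum0
    have hsum : 2 ^ m + p ^ k = 2 ^ (m + m + 1) - 1 := by simpa using hsum0
    set t : ℕ := 2 ^ m with ht
    have ht8 : 8 ≤ t := by
      calc (8:ℕ) = 2 ^ 3 := by norm_num
      _ ≤ 2 ^ m := Nat.pow_le_pow_right (by norm_num) hm
    have h2m : (2:ℕ) ^ (m + m + 1) = 2 * (t * t) := by
      rw [ht, ← pow_add, pow_succ]
      ring_nf
    obtain ⟨s, hs⟩ : ∃ s, t = s + 1 := ⟨t - 1, by omega⟩
    have hA : (t - 1) * (2 * t + 1) = 2 * (s * s) + 3 * s := by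
      rw [hs]; simp; ring
    have hB : t * t = s * s + 2 * s + 1 := by rw [hs]; ring
    have hval : p ^ k = (t - 1) * (2 * t + 1) := by omega
    have hpa : p ∣ t - 1 := pdvd hp hval (by omega)
    have hpb : p ∣ 2 * t + 1 :=
      pdvd hp (by rw [hval]; ring) (by omega)
    have hp3 : p ∣ 3 := by
      have h2a : p ∣ 2 * (t - 1) := hpa.mul_left 2
      have := Nat.dvd_sub hpb h2a
      have h3 : 2 * t + 1 - 2 * (t - 1) = 3 := by omega
      rwa [h3] at this
    have hp3' : p = 3 := (Nat.prime_dvd_prime_iff_eq hp (by norm_num)).1 hp3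
    -- t - 1 = 3 ^ j
    obtain ⟨j, hj, haj⟩ := (Nat.dvd_prime_pow hp).1 ⟨2 * t + 1, hval⟩
    rw [hp3'] at haj
    have h8t : (8:ℕ) ∣ t := by
      rw [ht]
      calc (8:ℕ) = 2 ^ 3 := by norm_num
      _ ∣ 2 ^ m := pow_dvd_pow 2 hm
    have := mod8 j
    omega
  · -- e odd, e ≥ 5, e + 1 = m + m with m ≥ 3
    obtain ⟨m0, rfl⟩ := hodd
    set m : ℕ := m0 + 1 with hmdef
    have hm : 3 ≤ m := by omega
    have hfil : (Finset.range (2 * m0 + 1 + 1)).filter (fun i => 2 * i ≠ 2 * m0 + 1)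
        = Finset.range (2 * m0 + 1 + 1) := by
      apply Finset.filter_true_of_mem
      intro i _
      omega
    rw [hfil, geom] at hpk
    set t : ℕ := 2 ^ m with ht
    have ht8 : 8 ≤ t := by
      calc (8:ℕ) = 2 ^ 3 := by norm_num
      _ ≤ 2 ^ m := Nat.pow_le_pow_right (by norm_num) hm
    have h2m : (2:ℕ) ^ (2 * m0 + 1 + 1) = t * t := by
      rw [ht, ← pow_add]
      congr 1
      omega
    obtain ⟨s, hs⟩ : ∃ s, t = s + 1 := ⟨t - 1, by omega⟩
    have hA : (t - 1) * (t + 1) = s * s + 2 * s := by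
      rw [hs]; simp; ring
    have hB : t * t = s * s + 2 * s + 1 := by rw [hs]; ring
    have hval : p ^ k = (t - 1) * (t + 1) := by omega
    have hpa : p ∣ t - 1 := pdvd hp hval (by omega)
    have hpb : p ∣ t + 1 := pdvd hp (by rw [hval]; ring) (by omega)
    have hp2 : p ∣ 2 := by
      have := Nat.dvd_sub hpb hpa
      have h2 : t + 1 - (t - 1) = 2 := by omega
      rwa [h2] at this
    have hp2' : p = 2 := (Nat.prime_dvd_prime_iff_eq hp (by norm_num)).1 hp2
    rw [hp2'] at hpa
    have h2t : (2:ℕ) ∣ t := by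
      rw [ht]
      exact dvd_pow_self 2 (by omega)
    omega
end
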